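/- arXiv:2602.23009 — 3 statements merged into one kernel-verified Lean document; each statement's English description precedes it below -/
import Mathlib

section
/- Let n be a positive integer and let F : I → Finset (Fin n) be an injective family of subsets of [n] indexed by a finite type I with |I| ≥ n + 2. Then there exist two nonempty disjoint subsets I₁ and I₂ of I such that the union of the sets F i over i ∈ I₁ equals the union of the sets F i over i ∈ I₂, and simultaneously the intersection of the sets F i over i ∈ I₁ equals the intersection of the sets F i over i ∈ I₂. -/
open Finset

private lemma split_sum {I : Type*} [Fintype I] (g t : I → ℝ)
    (h : ∑ i, t i = 0) (h0 : ∀ i, g i = 0 → t i = 0) :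
    ∑ i ∈ univ.filter (fun i => 0 < g i), t i
      = - ∑ i ∈ univ.filter (fun i => g i < 0), t i := by
  have hsplit := Finset.sum_filter_add_sum_filter_not univ (fun i => 0 < g i) t
  have hsub : ∑ i ∈ univ.filter (fun i => ¬ 0 < g i), t i
      = ∑ i ∈ univ.filter (fun i => g i < 0), t i := by
    refine (Finset.sum_subset ?_ ?_).symm
    · intro i hi
      simp only [mem_filter, mem_univ, true_and] at hi ⊢
      linarith
    · intro i hi hni
      simp only [mem_filter, mem_univ, true_and] at hi hni
      exact h0 i (by linarith)
  rw [hsub] at hsplit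
  linarith

private lemma aux_le {n : ℕ} {I : Type*} [Fintype I] (F : I → Finset (Fin n)) (g : I → ℝ)
    (h2 : ∑ i, g i = 0)
    (h1 : ∀ x : Fin n, ∑ i, g i * (if x ∈ F i then (1:ℝ) else 0) = 0) :
    (univ.filter (fun i => 0 < g i)).sup F ≤ (univ.filter (fun i => g i < 0)).sup F ∧
    (univ.filter (fun i => 0 < g i)).inf F ≤ (univ.filter (fun i => g i < 0)).inf F := by
  set I₁ := univ.filter (fun i => 0 < g i) with hI₁
  set I₂ := univ.filter (fun i => g i < 0) with hI₂
  have hg2 : ∑ i ∈ I₁, g i = - ∑ i ∈ I₂, g i :=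
    split_sum g g h2 (fun i h => h)
  have hmemI₁ : ∀ i, i ∈ I₁ ↔ 0 < g i := by intro i; simp [hI₁]
  have hmemI₂ : ∀ i, i ∈ I₂ ↔ g i < 0 := by intro i; simp [hI₂]
  constructor
  · -- sup ≤ sup
    intro x hx
    rw [Finset.mem_sup] at hx ⊢
    obtain ⟨i₀, hi₀, hxi₀⟩ := hx
    have hkey := split_sum g (fun i => g i * (if x ∈ F i then (1:ℝ) else 0)) (h1 x)
      (fun i h => by simp [h])
    beta_reduce at hkey
    by_contra hcon
    push_neg at hcon
    have hz : ∑ i ∈ I₂, g i * (if x ∈ F i then (1:ℝ) else 0) = 0 := by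
      apply Finset.sum_eq_zero
      intro i hi
      rw [if_neg (hcon i hi)]; ring
    have hpos : (0:ℝ) < ∑ i ∈ I₁, g i * (if x ∈ F i then (1:ℝ) else 0) := by
      apply Finset.sum_pos'
      · intro i hi
        have hgi := (hmemI₁ i).1 hi
        split_ifs <;> nlinarith
      · refine ⟨i₀, hi₀, ?_⟩
        rw [if_pos hxi₀]
        have := (hmemI₁ i₀).1 hi₀
        nlinarith
    rw [hz] at hkey
    linarith
  · -- inf ≤ inf
    intro x hx
    rw [Finset.mem_inf] at hx ⊢
    intro i hi
    have hkey := split_sum g (fun i => g i * (if x ∈ F i then (1:ℝ) else 0)) (h1 x)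
      (fun i h => by simp [h])
    beta_reduce at hkey
    have hA : ∑ i ∈ I₁, g i * (if x ∈ F i then (1:ℝ) else 0) = ∑ i ∈ I₁, g i := by
      apply Finset.sum_congr rfl
      intro j hj
      rw [if_pos (hx j hj)]; ring
    have hB : ∑ i ∈ I₂, g i * (if x ∈ F i then (1:ℝ) else 0) = ∑ i ∈ I₂, g i := by
      rw [hA, hg2] at hkey
      linarith
    have hle : ∀ j ∈ I₂, g j ≤ g j * (if x ∈ F j then (1:ℝ) else 0) := by
      intro j hj
      rcases ite_eq_or_eq (x ∈ F j) (1:ℝ) 0 with h | h <;> rw [h]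
      · linarith
      · nlinarith [(hmemI₂ j).1 hj]
    have := (Finset.sum_eq_sum_iff_of_le hle).1 hB.symm i hi
    by_contra hxn
    rw [if_neg hxn] at this
    nlinarith [(hmemI₂ i).1 hi]

/-- Lindström's theorem (Theorem 1.2): any family of at least `n + 2` distinct subsets of `[n]`
is balanced: there exist two nonempty disjoint index sets whose unions agree and whose
intersections agree. -/
theorem balanced_of_card_ge {n : ℕ} (hn : 0 < n) {I : Type*} [Fintype I] [DecidableEq I]
    (F : I → Finset (Fin n)) (hF : Function.Injective F)
    (hcard : n + 2 ≤ Fintype.card I) :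
    ∃ I₁ I₂ : Finset I, I₁.Nonempty ∧ I₂.Nonempty ∧ Disjoint I₁ I₂ ∧
      I₁.sup F = I₂.sup F ∧ I₁.inf F = I₂.inf F := by
  classical
  set v : I → (Fin n → ℝ) × ℝ := fun i => (fun x => if x ∈ F i then 1 else 0, 1) with hv
  have hfr : Module.finrank ℝ ((Fin n → ℝ) × ℝ) = n + 1 := by
    simp [Module.finrank_prod]
  have hnli : ¬ LinearIndependent ℝ v := by
    intro h
    have := h.fintype_card_le_finrank
    rw [hfr] at this
    omega
  obtain ⟨g, hgsum, i₀, hgi₀⟩ := Fintype.not_linearIndependent_iff.1 hnli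
  have h1 : ∀ x : Fin n, ∑ i, g i * (if x ∈ F i then (1:ℝ) else 0) = 0 := by
    intro x
    have h := congrArg Prod.fst hgsum
    rw [Prod.fst_sum] at h
    have h' := congrFun h x
    rw [Finset.sum_apply] at h'
    simpa [hv, mul_ite, mul_one, mul_zero] using h'
  have h2 : ∑ i, g i = 0 := by
    have h := congrArg Prod.snd hgsum
    rw [Prod.snd_sum] at h
    simpa [hv] using h
  set I₁ := univ.filter (fun i => 0 < g i) with hI₁
  set I₂ := univ.filter (fun i => g i < 0) with hI₂
  have hne : I₁.Nonempty ∧ I₂.Nonempty := by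
    constructor
    · by_contra h
      rw [Finset.not_nonempty_iff_eq_empty, Finset.filter_eq_empty_iff] at h
      have hle : ∀ i ∈ univ, g i ≤ 0 := fun i hi => by
        have := h (Finset.mem_univ i); push_neg at this; linarith
      rcases lt_trichotomy (g i₀) 0 with hlt | heq | hgt
      · have : ∑ i, g i < 0 := by
          have hs := Finset.sum_le_sum hle
          have h₂ : ∑ i ∈ univ, g i ≠ 0 := by
            intro hz
            have := (Finset.sum_eq_zero_iff_of_nonpos hle).1 hz i₀ (Finset.mem_univ i₀)
            linarith
          simp only [Finset.sum_const, smul_zero] at hs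
          cases lt_or_eq_of_le hs with
          | inl h => exact h
          | inr h => exact absurd h h₂
        linarith [h2]
      · exact hgi₀ heq
      · exact absurd hgt (by have := h (Finset.mem_univ i₀); push_neg at this; linarith)
    · by_contra h
      rw [Finset.not_nonempty_iff_eq_empty, Finset.filter_eq_empty_iff] at h
      have hle : ∀ i ∈ univ, 0 ≤ g i := fun i hi => by
        have := h (Finset.mem_univ i); push_neg at this; linarith
      have := (Finset.sum_eq_zero_iff_of_nonneg hle).1 h2 i₀ (Finset.mem_univ i₀)
      exact hgi₀ this
  have hdisj : Disjoint I₁ I₂ := by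
    rw [Finset.disjoint_left]
    intro i hi₁ hi₂
    simp only [hI₁, hI₂, mem_filter, mem_univ, true_and] at hi₁ hi₂
    linarith
  have haux := aux_le F g h2 h1
  have hneg2 : ∑ i, (-g) i = 0 := by simp [h2]
  have hneg1 : ∀ x : Fin n, ∑ i, (-g) i * (if x ∈ F i then (1:ℝ) else 0) = 0 := by
    intro x
    have := h1 x
    simp only [Pi.neg_apply, neg_mul]
    rw [Finset.sum_neg_distrib]
    linarith
  have hauxneg := aux_le F (-g) hneg2 hneg1
  have e1 : univ.filter (fun i => 0 < (-g) i) = I₂ := by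
    apply Finset.filter_congr
    intro i _
    simp
  have e2 : univ.filter (fun i => (-g) i < 0) = I₁ := by
    apply Finset.filter_congr
    intro i _
    simp
  rw [e1, e2] at hauxneg
  exact ⟨I₁, I₂, hne.1, hne.2, hdisj,
    le_antisymm haux.1 hauxneg.1, le_antisymm haux.2 hauxneg.2⟩
end

section
/- Let n and k be positive integers with k ≥ 1, and let F : I → Finset (Fin n) be an injective family of subsets of [n] indexed by a finite type I with |I| ≥ n + 1, such that every set F i has cardinality exactly k. Then there exist two nonempty disjoint subsets I₁ and I₂ of I such that the union of the sets F i over i ∈ I₁ equals the union of the sets F i over i ∈ I₂, and simultaneously the intersection of the sets F i over i ∈ I₁ equals the intersection of the sets F i over i ∈ I₂. -/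
/-- Main theorem (Theorem 1.3): any `k`-uniform family of at least `n + 1` distinct subsets of
`[n]` is balanced: there exist two nonempty disjoint index sets whose unions agree and whose
intersections agree. -/
theorem balanced_of_uniform_of_card_ge {n k : ℕ} (hn : 0 < n) (hk : 1 ≤ k)
    {I : Type*} [Fintype I] [DecidableEq I]
    (F : I → Finset (Fin n)) (hF : Function.Injective F)
    (huniform : ∀ i, (F i).card = k)
    (hcard : n + 1 ≤ Fintype.card I) :
    ∃ I₁ I₂ : Finset I, I₁.Nonempty ∧ I₂.Nonempty ∧ Disjoint I₁ I₂ ∧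
      I₁.sup F = I₂.sup F ∧ I₁.inf F = I₂.inf F := by
  classical
  -- indicator vectors
  set v : I → (Fin n → ℝ) := fun i x => if x ∈ F i then 1 else 0 with hv
  have hnotli : ¬ LinearIndependent ℝ v := by
    intro h
    have h2 := h.fintype_card_le_finrank
    rw [Module.finrank_fin_fun] at h2
    omega
  obtain ⟨g, hsum, i₀, hi₀⟩ := Fintype.not_linearIndependent_iff.mp hnotli
  set c : Fin n → I → ℝ := fun x i => g i * (if x ∈ F i then 1 else 0) with hc
  have hpt : ∀ x : Fin n, ∑ i, c x i = 0 := by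
    intro x
    have := congrFun hsum x
    simpa [v, c, Finset.sum_apply] using this
  -- total sum of coefficients is zero
  have hg0 : ∑ i, g i = 0 := by
    have h1 : ∑ x : Fin n, ∑ i, c x i = 0 := by simp [hpt]
    rw [Finset.sum_comm] at h1
    have h2 : ∀ i : I, ∑ x : Fin n, c x i = g i * k := by
      intro i
      rw [hc]
      simp only
      rw [← Finset.mul_sum]
      congr 1
      rw [Finset.sum_boole]
      rw [Finset.filter_mem_eq_inter, Finset.univ_inter, huniform i]
    simp only [h2, ← Finset.sum_mul] at h1
    have hk' : (k : ℝ) ≠ 0 := by positivity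
    exact (mul_eq_zero.mp h1).resolve_right hk'
  set I₁ : Finset I := Finset.univ.filter (fun i => 0 < g i) with hI₁
  set I₂ : Finset I := Finset.univ.filter (fun i => g i < 0) with hI₂
  have hmem₁ : ∀ i, i ∈ I₁ ↔ 0 < g i := by intro i; simp [hI₁]
  have hmem₂ : ∀ i, i ∈ I₂ ↔ g i < 0 := by intro i; simp [hI₂]
  have hdisj : Disjoint I₁ I₂ := by
    rw [Finset.disjoint_left]
    intro i h1 h2
    rw [hmem₁] at h1; rw [hmem₂] at h2
    linarith
  -- splitting sums over I₁ and I₂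
  have key : ∀ h : I → ℝ, (∀ i, g i = 0 → h i = 0) →
      ∑ i, h i = ∑ i ∈ I₁, h i + ∑ i ∈ I₂, h i := by
    intro h hh
    rw [← Finset.sum_filter_add_sum_filter_not Finset.univ (fun i => 0 < g i) h]
    congr 1
    symm
    apply Finset.sum_subset
    · intro i hi
      simp only [Finset.mem_filter, Finset.mem_univ, true_and] at hi ⊢
      rw [hmem₂] at hi
      linarith
    · intro i hi1 hi2
      simp only [Finset.mem_filter, Finset.mem_univ, true_and, not_lt] at hi1
      rw [hmem₂] at hi2
      push_neg at hi2
      exact hh i (le_antisymm hi1 hi2)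
  have hS : ∑ i ∈ I₁, g i = ∑ i ∈ I₂, (-g i) := by
    have := key g (fun i h => h)
    rw [hg0] at this
    rw [Finset.sum_neg_distrib]
    linarith
  have hLR : ∀ x, ∑ i ∈ I₁, c x i = ∑ i ∈ I₂, (-(c x i)) := by
    intro x
    have := key (c x) (fun i h => by simp [hc, h])
    rw [hpt x] at this
    rw [Finset.sum_neg_distrib]
    linarith
  have hnonneg₁ : ∀ x, ∀ i ∈ I₁, 0 ≤ c x i := by
    intro x i hi
    rw [hmem₁] at hi
    rw [hc]
    simp only
    split <;> [linarith; simp]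
  have hnonneg₂ : ∀ x, ∀ i ∈ I₂, 0 ≤ -(c x i) := by
    intro x i hi
    rw [hmem₂] at hi
    rw [hc]
    simp only
    split <;> [linarith; simp]
  have hpos1 : ∀ x, 0 < ∑ i ∈ I₁, c x i ↔ ∃ i ∈ I₁, x ∈ F i := by
    intro x
    constructor
    · intro h
      by_contra hcon
      push_neg at hcon
      have : ∑ i ∈ I₁, c x i = 0 :=
        Finset.sum_eq_zero (fun i hi => by simp [hc, hcon i hi])
      linarith
    · rintro ⟨i, hi, hx⟩
      refine Finset.sum_pos' (hnonneg₁ x) ⟨i, hi, ?_⟩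
      have := (hmem₁ i).mp hi
      simp [hc, hx, this]
  have hpos2 : ∀ x, 0 < ∑ i ∈ I₂, -(c x i) ↔ ∃ i ∈ I₂, x ∈ F i := by
    intro x
    constructor
    · intro h
      by_contra hcon
      push_neg at hcon
      have : ∑ i ∈ I₂, -(c x i) = 0 :=
        Finset.sum_eq_zero (fun i hi => by simp [hc, hcon i hi])
      linarith
    · rintro ⟨i, hi, hx⟩
      refine Finset.sum_pos' (hnonneg₂ x) ⟨i, hi, ?_⟩
      have := (hmem₂ i).mp hi
      simp only [hc, hx, if_pos, mul_one, neg_pos]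
      linarith
  -- nonemptiness
  have hne : I₁.Nonempty ∧ I₂.Nonempty := by
    have hFne : (F i₀).Nonempty := by
      rw [← Finset.card_pos, huniform i₀]; omega
    obtain ⟨x, hx⟩ := hFne
    rcases lt_or_gt_of_ne hi₀ with hlt | hgt
    · have hi₀2 : i₀ ∈ I₂ := (hmem₂ i₀).mpr hlt
      have h2 : 0 < ∑ i ∈ I₂, -(c x i) := (hpos2 x).mpr ⟨i₀, hi₀2, hx⟩
      have h1 : 0 < ∑ i ∈ I₁, c x i := by rw [hLR x]; exact h2
      obtain ⟨i, hi, _⟩ := (hpos1 x).mp h1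
      exact ⟨⟨i, hi⟩, ⟨i₀, hi₀2⟩⟩
    · have hi₀1 : i₀ ∈ I₁ := (hmem₁ i₀).mpr hgt
      have h1 : 0 < ∑ i ∈ I₁, c x i := (hpos1 x).mpr ⟨i₀, hi₀1, hx⟩
      have h2 : 0 < ∑ i ∈ I₂, -(c x i) := by rw [← hLR x]; exact h1
      obtain ⟨i, hi, _⟩ := (hpos2 x).mp h2
      exact ⟨⟨i₀, hi₀1⟩, ⟨i, hi⟩⟩
  obtain ⟨hne₁, hne₂⟩ := hne
  refine ⟨I₁, I₂, hne₁, hne₂, hdisj, ?_, ?_⟩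
  · -- unions agree
    ext x
    simp only [Finset.mem_sup]
    rw [← hpos1 x, ← hpos2 x, hLR x]
  · -- intersections agree
    have hinf1 : ∀ x, x ∈ I₁.inf F ↔ ∑ i ∈ I₁, c x i = ∑ i ∈ I₁, g i := by
      intro x
      rw [← Finset.inf'_eq_inf hne₁, Finset.mem_inf']
      constructor
      · intro h
        exact Finset.sum_congr rfl (fun i hi => by simp [hc, h i hi])
      · intro h i hi
        have hzero : ∑ i ∈ I₁, (g i - c x i) = 0 := by
          rw [Finset.sum_sub_distrib, h, sub_self]
        have hnn : ∀ j ∈ I₁, 0 ≤ g j - c x j := by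
          intro j hj
          have hgj := (hmem₁ j).mp hj
          simp only [hc]
          split <;> simp <;> linarith
        have := (Finset.sum_eq_zero_iff_of_nonneg hnn).mp hzero i hi
        have hgi := (hmem₁ i).mp hi
        by_contra hx
        simp [hc, hx] at this
        linarith
    have hinf2 : ∀ x, x ∈ I₂.inf F ↔ ∑ i ∈ I₂, -(c x i) = ∑ i ∈ I₂, (-g i) := by
      intro x
      rw [← Finset.inf'_eq_inf hne₂, Finset.mem_inf']
      constructor
      · intro h
        exact Finset.sum_congr rfl (fun i hi => by simp [hc, h i hi])
      · intro h i hi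
        have hzero : ∑ i ∈ I₂, ((-g i) - -(c x i)) = 0 := by
          rw [Finset.sum_sub_distrib, h, sub_self]
        have hnn : ∀ j ∈ I₂, 0 ≤ (-g j) - -(c x j) := by
          intro j hj
          have hgj := (hmem₂ j).mp hj
          simp only [hc]
          split <;> simp <;> linarith
        have := (Finset.sum_eq_zero_iff_of_nonneg hnn).mp hzero i hi
        have hgi := (hmem₂ i).mp hi
        by_contra hx
        simp [hc, hx] at this
        linarith
    ext x
    rw [hinf1 x, hinf2 x, hLR x, hS]
end

section
/- Let n ≥ 3 be an integer and consider the family F of subsets of [n] consisting of the set {2,3} together with all sets {1, i} for 2 ≤ i ≤ n. Then |F| = n, F is 2-uniform, and F is not a balanced family: there do not exist two nonempty disjoint subfamilies of F whose unions agree and whose intersections agree. -/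
/-- Sharpness of the main theorem (Theorem 1.3): for `n ≥ 3`, the family on `[n]` consisting of
`{2,3}` together with all sets `{1, i}` for `2 ≤ i ≤ n` has `n` members, is `2`-uniform, and is
not balanced. -/
theorem sharp_example_not_balanced {n : ℕ} (hn : 3 ≤ n) :
    ({({2, 3} : Finset ℕ)} ∪ (Finset.Icc 2 n).image fun i => ({1, i} : Finset ℕ)).card = n ∧
    (∀ s ∈ ({({2, 3} : Finset ℕ)} ∪ (Finset.Icc 2 n).image fun i => ({1, i} : Finset ℕ)),
      s.card = 2) ∧
    ¬ ∃ (I₁ I₂ : Finset (Finset ℕ)) (h₁ : I₁.Nonempty) (h₂ : I₂.Nonempty),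
        I₁ ⊆ ({({2, 3} : Finset ℕ)} ∪ (Finset.Icc 2 n).image fun i => ({1, i} : Finset ℕ)) ∧
        I₂ ⊆ ({({2, 3} : Finset ℕ)} ∪ (Finset.Icc 2 n).image fun i => ({1, i} : Finset ℕ)) ∧
        Disjoint I₁ I₂ ∧
        I₁.sup id = I₂.sup id ∧
        I₁.inf' h₁ id = I₂.inf' h₂ id := by
  have hmem : ∀ s : Finset ℕ,
      s ∈ ({({2, 3} : Finset ℕ)} ∪ (Finset.Icc 2 n).image fun i => ({1, i} : Finset ℕ)) ↔
      s = {2, 3} ∨ ∃ i, 2 ≤ i ∧ i ≤ n ∧ s = {1, i} := by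
    intro s
    simp only [Finset.mem_union, Finset.mem_singleton, Finset.mem_image, Finset.mem_Icc]
    constructor
    · rintro (h | ⟨i, ⟨h2, h3⟩, h4⟩)
      · exact Or.inl h
      · exact Or.inr ⟨i, h2, h3, h4.symm⟩
    · rintro (h | ⟨i, h2, h3, h4⟩)
      · exact Or.inl h
      · exact Or.inr ⟨i, ⟨h2, h3⟩, h4.symm⟩
  refine ⟨?_, ?_, ?_⟩
  · have hdisj : Disjoint {({2, 3} : Finset ℕ)}
        ((Finset.Icc 2 n).image fun i => ({1, i} : Finset ℕ)) := by
      simp only [Finset.disjoint_singleton_left, Finset.mem_image, Finset.mem_Icc, not_exists]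
      rintro i ⟨⟨hi2, hin⟩, h⟩
      have : (1 : ℕ) ∈ ({2, 3} : Finset ℕ) := by rw [← h]; simp
      simp at this
    rw [Finset.card_union_of_disjoint hdisj, Finset.card_singleton,
      Finset.card_image_of_injOn, Nat.card_Icc]
    · omega
    · intro i hi j hj h
      simp only [Finset.mem_coe, Finset.mem_Icc] at hi hj
      simp only at h
      have : i ∈ ({1, j} : Finset ℕ) := by rw [← h]; simp
      simp only [Finset.mem_insert, Finset.mem_singleton] at this
      omega
  · intro s hs
    rw [hmem] at hs
    rcases hs with rfl | ⟨i, hi2, hin, rfl⟩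
    · decide
    · rw [Finset.card_insert_of_notMem (by simp; omega), Finset.card_singleton]
  · rintro ⟨I₁, I₂, h₁, h₂, hs₁, hs₂, hdis, hu, hi⟩
    have key : ∀ (J K : Finset (Finset ℕ)) (hJ : J.Nonempty) (hK : K.Nonempty),
        (∀ s ∈ K, s ∈ ({({2, 3} : Finset ℕ)} ∪
          (Finset.Icc 2 n).image fun i => ({1, i} : Finset ℕ))) →
        Disjoint J K → J.inf' hJ id = K.inf' hK id → ({2, 3} : Finset ℕ) ∈ J → False := by
      intro J K hJ hK hKsub hd hinf h23
      have h1K : ({1} : Finset ℕ) ≤ K.inf' hK id := by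
        apply Finset.le_inf'
        intro t ht
        have htF := hKsub t ht
        rw [hmem] at htF
        rcases htF with rfl | ⟨i, hi2, hin, rfl⟩
        · exact absurd h23 (Finset.disjoint_left.mp hd · ht)
        · simp
      have h2 : J.inf' hJ id ≤ ({2, 3} : Finset ℕ) := Finset.inf'_le id h23
      have : ({1} : Finset ℕ) ≤ ({2, 3} : Finset ℕ) := le_trans (hinf ▸ h1K) h2
      have := Finset.singleton_subset_iff.mp this
      simp at this
    by_cases hc1 : ({2, 3} : Finset ℕ) ∈ I₁
    · exact key I₁ I₂ h₁ h₂ (fun s hs => hs₂ hs) hdis hi hc1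
    by_cases hc2 : ({2, 3} : Finset ℕ) ∈ I₂
    · exact key I₂ I₁ h₂ h₁ (fun s hs => hs₁ hs) hdis.symm hi.symm hc2
    · obtain ⟨a, ha⟩ := h₁
      have haF := hs₁ ha
      rw [hmem] at haF
      rcases haF with rfl | ⟨i, hi2, hin, rfl⟩
      · exact hc1 ha
      · have hia : i ∈ I₁.sup id := by
          have : ({1, i} : Finset ℕ) ≤ I₁.sup id := Finset.le_sup (f := id) ha
          exact this (by simp)
        rw [hu, Finset.mem_sup] at hia
        obtain ⟨t, ht, hit⟩ := hia
        have htF := hs₂ ht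
        rw [hmem] at htF
        rcases htF with rfl | ⟨j, hj2, hjn, rfl⟩
        · exact hc2 ht
        · simp only [id_eq, Finset.mem_insert, Finset.mem_singleton] at hit
          have : i = j := by omega
          subst this
          exact Finset.disjoint_left.mp hdis ha ht
end
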